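/- In the restricted two-valued class-segregated buffer model (one queue for value 1 and one queue for value α > 1, both of capacity B), GREEDY is (α+2)/(α+1)-competitive: for every input sequence σ, OPT(σ) ≤ ((α+2)/(α+1)) · GREEDY(σ). -/
import Mathlib


/-!
Model of class-segregated buffer management (Al-Bawani, Souza).

A switch has `n` queues and `m` packet values `val : Fin m → ℝ`; queue `q` is
assigned value index `qval q` and has capacity `cap q`.  An input sequence is a
list of events: an `arrive q` event (a packet destined to queue `q`) or a
`send` event.  A (diligent) schedule is given by its decisions at send events,
`dec : ℕ → Option (Fin n)` (decision for the `k`-th send event): acceptance is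
forced (accept iff the destination queue is not full), at a send event the
schedule transmits one packet from the chosen non-empty queue, and it may
choose `none` only if all queues are empty.  `run` simulates the schedule,
tracking queue contents, the number of accepted packets of each value, and the
number of transmitted packets of each value.  `Feasible` expresses diligence,
and `GreedyFeasible` additionally requires that every transmitted packet has
the highest value among non-empty queues (ties broken arbitrarily).
`benefit` is the total value of transmitted packets.
-/

namespace BufferModel

inductive BEvent (n : ℕ) : Type where
  | arrive (q : Fin n) : BEvent n
  | send : BEvent n
deriving DecidableEq

/-- `queue q` = number of packets currently in queue `q`; `acc i` = number of
packets of value index `i` accepted so far; `trans i` = number of packets of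
value index `i` transmitted so far. -/
structure BState (n m : ℕ) where
  queue : Fin n → ℕ
  acc : Fin m → ℕ
  trans : Fin m → ℕ

def initState (n m : ℕ) : BState n m :=
  ⟨fun _ => 0, fun _ => 0, fun _ => 0⟩

/-- Diligent processing of an arrive event at queue `q`: accept iff there is room. -/
def arriveStep {n m : ℕ} (cap : Fin n → ℕ) (qval : Fin n → Fin m)
    (s : BState n m) (q : Fin n) : BState n m :=
  if s.queue q < cap q then
    { queue := Function.update s.queue q (s.queue q + 1)
      acc := Function.update s.acc (qval q) (s.acc (qval q) + 1)
      trans := s.trans }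
  else s

/-- Processing of a send event with decision `d`. -/
def sendStep {n m : ℕ} (qval : Fin n → Fin m) (s : BState n m)
    (d : Option (Fin n)) : BState n m :=
  match d with
  | some q =>
      if 0 < s.queue q then
        { queue := Function.update s.queue q (s.queue q - 1)
          acc := s.acc
          trans := Function.update s.trans (qval q) (s.trans (qval q) + 1) }
      else s
  | none => s

/-- Simulate the schedule with send-decisions `dec` on an event list, starting
with send-counter `k` and state `s`. -/
def run {n m : ℕ} (cap : Fin n → ℕ) (qval : Fin n → Fin m)
    (dec : ℕ → Option (Fin n)) :
    List (BEvent n) → ℕ → BState n m → BState n m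
  | [], _, s => s
  | BEvent.arrive q :: es, k, s => run cap qval dec es k (arriveStep cap qval s q)
  | BEvent.send :: es, k, s => run cap qval dec es (k + 1) (sendStep qval s (dec k))

/-- The schedule `dec` is feasible (diligent): at each send event it transmits
from a non-empty queue, and it stays idle only if all queues are empty. -/
def Feasible {n m : ℕ} (cap : Fin n → ℕ) (qval : Fin n → Fin m)
    (dec : ℕ → Option (Fin n)) :
    List (BEvent n) → ℕ → BState n m → Prop
  | [], _, _ => True
  | BEvent.arrive q :: es, k, s => Feasible cap qval dec es k (arriveStep cap qval s q)
  | BEvent.send :: es, k, s =>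
      (match dec k with
       | some q => 0 < s.queue q
       | none => ∀ q, s.queue q = 0) ∧
      Feasible cap qval dec es (k + 1) (sendStep qval s (dec k))

/-- The schedule `dec` is a GREEDY schedule: feasible, and at every send event
it transmits a packet from a non-empty queue of the highest value. -/
def GreedyFeasible {n m : ℕ} (val : Fin m → ℝ) (cap : Fin n → ℕ)
    (qval : Fin n → Fin m) (dec : ℕ → Option (Fin n)) :
    List (BEvent n) → ℕ → BState n m → Prop
  | [], _, _ => True
  | BEvent.arrive q :: es, k, s =>
      GreedyFeasible val cap qval dec es k (arriveStep cap qval s q)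
  | BEvent.send :: es, k, s =>
      (match dec k with
       | some q => 0 < s.queue q ∧
           ∀ q', 0 < s.queue q' → val (qval q') ≤ val (qval q)
       | none => ∀ q, s.queue q = 0) ∧
      GreedyFeasible val cap qval dec es (k + 1) (sendStep qval s (dec k))

/-- Benefit of a schedule: total value of the transmitted packets. -/
def benefit {n m : ℕ} (val : Fin m → ℝ) (s : BState n m) : ℝ :=
  ∑ i, val i * (s.trans i : ℝ)

end BufferModel

namespace BufferModel

/-! ### Auxiliary machinery for the competitive analysis -/

/-- The potential function of the amortized analysis (scaled by `α + 1`). -/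
noncomputable def abPsi (α G0 G1 D0 D1 : ℝ) : ℝ :=
  (α^2 + α - 1) * (D1 - G1) +
    max 0 ((α+1)*D0 + D1 - (α+2)*G0 - (α+1)*G1)

lemma abMax_shift (x δ : ℝ) (hδ : 0 ≤ δ) : max 0 (x + δ) ≤ max 0 x + δ := by
  apply max_le
  · have := le_max_left 0 x; linarith
  · have := le_max_right 0 x; linarith

lemma abMax_mono {x y : ℝ} (h : x ≤ y) : max 0 x ≤ max 0 y := max_le_max le_rfl h

lemma abPsi_nonneg (α : ℝ) (hα : 1 < α) {G0 G1 D0 D1 : ℝ} (h : G1 ≤ D1) :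
    0 ≤ abPsi α G0 G1 D0 D1 := by
  unfold abPsi
  have := le_max_left (0:ℝ) ((α+1)*D0 + D1 - (α+2)*G0 - (α+1)*G1)
  nlinarith

lemma abStep_aa (α : ℝ) (hα : 1 < α) (G0 G1 D0 D1 : ℝ) :
    (α+1)*α + abPsi α G0 (G1-1) D0 (D1-1) ≤ abPsi α G0 G1 D0 D1 + (α+2)*α := by
  unfold abPsi
  have e : (α+1)*D0 + (D1-1) - (α+2)*G0 - (α+1)*(G1-1)
      = ((α+1)*D0 + D1 - (α+2)*G0 - (α+1)*G1) + α := by ring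
  rw [e]
  nlinarith [abMax_shift ((α+1)*D0 + D1 - (α+2)*G0 - (α+1)*G1) α (by linarith)]

lemma abStep_a1 (α : ℝ) (hα : 1 < α) (G0 G1 D0 D1 : ℝ) :
    (α+1)*1 + abPsi α G0 (G1-1) (D0-1) D1 ≤ abPsi α G0 G1 D0 D1 + (α+2)*α := by
  unfold abPsi
  have e : (α+1)*(D0-1) + D1 - (α+2)*G0 - (α+1)*(G1-1)
      = ((α+1)*D0 + D1 - (α+2)*G0 - (α+1)*G1) := by ring
  rw [e]; nlinarith [le_max_left (0:ℝ) ((α+1)*D0 + D1 - (α+2)*G0 - (α+1)*G1)]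

lemma abStep_a0 (α : ℝ) (hα : 1 < α) (G0 G1 : ℝ) (hG0 : 0 ≤ G0) (hG1 : 1 ≤ G1) :
    abPsi α G0 (G1-1) 0 0 ≤ abPsi α G0 G1 0 0 + (α+2)*α := by
  unfold abPsi
  have e1 : max 0 ((α+1)*0 + 0 - (α+2)*G0 - (α+1)*(G1-1)) = 0 :=
    max_eq_left (by nlinarith)
  have e2 : max 0 ((α+1)*0 + 0 - (α+2)*G0 - (α+1)*G1) = 0 :=
    max_eq_left (by nlinarith)
  rw [e1, e2]; nlinarith

lemma abStep_1a (α : ℝ) (hα : 1 < α) (G0 D0 D1 : ℝ) :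
    (α+1)*α + abPsi α (G0-1) 0 D0 (D1-1) ≤ abPsi α G0 0 D0 D1 + (α+2)*1 := by
  unfold abPsi
  have e : (α+1)*D0 + (D1-1) - (α+2)*(G0-1) - (α+1)*0
      = ((α+1)*D0 + D1 - (α+2)*G0 - (α+1)*0) + (α+1) := by ring
  rw [e]
  nlinarith [abMax_shift ((α+1)*D0 + D1 - (α+2)*G0 - (α+1)*0) (α+1) (by linarith)]

lemma abStep_11 (α : ℝ) (hα : 1 < α) (G0 D0 D1 : ℝ) :
    (α+1)*1 + abPsi α (G0-1) 0 (D0-1) D1 ≤ abPsi α G0 0 D0 D1 + (α+2)*1 := by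
  unfold abPsi
  have e : (α+1)*(D0-1) + D1 - (α+2)*(G0-1) - (α+1)*0
      = ((α+1)*D0 + D1 - (α+2)*G0 - (α+1)*0) + 1 := by ring
  rw [e]
  nlinarith [abMax_shift ((α+1)*D0 + D1 - (α+2)*G0 - (α+1)*0) 1 (by linarith)]

lemma abStep_10 (α : ℝ) (hα : 1 < α) (G0 : ℝ) (hG0 : 1 ≤ G0) :
    abPsi α (G0-1) 0 0 0 ≤ abPsi α G0 0 0 0 + (α+2)*1 := by
  unfold abPsi
  have e1 : max 0 ((α+1)*0 + 0 - (α+2)*(G0-1) - (α+1)*0) = 0 :=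
    max_eq_left (by nlinarith)
  have e2 : max 0 ((α+1)*0 + 0 - (α+2)*G0 - (α+1)*0) = 0 :=
    max_eq_left (by nlinarith)
  rw [e1, e2]; nlinarith

lemma abStep_0a (α : ℝ) (hα : 1 < α) (D0 D1 : ℝ) (hD0 : 0 ≤ D0) (hD1 : 1 ≤ D1) :
    (α+1)*α + abPsi α 0 0 D0 (D1-1) ≤ abPsi α 0 0 D0 D1 := by
  unfold abPsi
  have e1 : max 0 ((α+1)*D0 + (D1-1) - (α+2)*0 - (α+1)*0)
      = (α+1)*D0 + (D1-1) - (α+2)*0 - (α+1)*0 := max_eq_right (by nlinarith)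
  have e2 : max 0 ((α+1)*D0 + D1 - (α+2)*0 - (α+1)*0)
      = (α+1)*D0 + D1 - (α+2)*0 - (α+1)*0 := max_eq_right (by nlinarith)
  rw [e1, e2]; nlinarith

lemma abStep_01 (α : ℝ) (hα : 1 < α) (D0 D1 : ℝ) (hD0 : 1 ≤ D0) (hD1 : 0 ≤ D1) :
    (α+1)*1 + abPsi α 0 0 (D0-1) D1 ≤ abPsi α 0 0 D0 D1 := by
  unfold abPsi
  have e1 : max 0 ((α+1)*(D0-1) + D1 - (α+2)*0 - (α+1)*0)
      = (α+1)*(D0-1) + D1 - (α+2)*0 - (α+1)*0 := max_eq_right (by nlinarith)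
  have e2 : max 0 ((α+1)*D0 + D1 - (α+2)*0 - (α+1)*0)
      = (α+1)*D0 + D1 - (α+2)*0 - (α+1)*0 := max_eq_right (by nlinarith)
  rw [e1, e2]; nlinarith

lemma abArr1_both (α : ℝ) (hα : 1 < α) (G0 G1 D0 D1 : ℝ) :
    abPsi α G0 (G1+1) D0 (D1+1) ≤ abPsi α G0 G1 D0 D1 := by
  unfold abPsi
  have e : (α+1)*D0 + (D1+1) - (α+2)*G0 - (α+1)*(G1+1)
      = ((α+1)*D0 + D1 - (α+2)*G0 - (α+1)*G1) + (-α) := by ring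
  rw [e]
  nlinarith [abMax_mono (show ((α+1)*D0 + D1 - (α+2)*G0 - (α+1)*G1) + (-α)
      ≤ (α+1)*D0 + D1 - (α+2)*G0 - (α+1)*G1 by linarith)]

lemma abArr1_g (α : ℝ) (hα : 1 < α) (G0 G1 D0 D1 : ℝ) :
    abPsi α G0 (G1+1) D0 D1 ≤ abPsi α G0 G1 D0 D1 := by
  unfold abPsi
  nlinarith [abMax_mono (show (α+1)*D0 + D1 - (α+2)*G0 - (α+1)*(G1+1)
      ≤ (α+1)*D0 + D1 - (α+2)*G0 - (α+1)*G1 by nlinarith)]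

lemma abArr0_both (α : ℝ) (hα : 1 < α) (G0 G1 D0 D1 : ℝ) :
    abPsi α (G0+1) G1 (D0+1) D1 ≤ abPsi α G0 G1 D0 D1 := by
  unfold abPsi
  nlinarith [abMax_mono (show (α+1)*(D0+1) + D1 - (α+2)*(G0+1) - (α+1)*G1
      ≤ (α+1)*D0 + D1 - (α+2)*G0 - (α+1)*G1 by nlinarith)]

lemma abArr0_g (α : ℝ) (hα : 1 < α) (G0 G1 D0 D1 : ℝ) :
    abPsi α (G0+1) G1 D0 D1 ≤ abPsi α G0 G1 D0 D1 := by
  unfold abPsi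
  nlinarith [abMax_mono (show (α+1)*D0 + D1 - (α+2)*(G0+1) - (α+1)*G1
      ≤ (α+1)*D0 + D1 - (α+2)*G0 - (α+1)*G1 by nlinarith)]

lemma abArr0_d (α : ℝ) (hα : 1 < α) (G0 G1 D0 D1 : ℝ)
    (h1 : D0 + 1 ≤ G0) (h2 : D1 ≤ G0) (hG1 : 0 ≤ G1) :
    abPsi α G0 G1 (D0+1) D1 ≤ abPsi α G0 G1 D0 D1 := by
  unfold abPsi
  have e1 : max 0 ((α+1)*(D0+1) + D1 - (α+2)*G0 - (α+1)*G1) = 0 :=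
    max_eq_left (by nlinarith)
  have e2 : max 0 ((α+1)*D0 + D1 - (α+2)*G0 - (α+1)*G1) = 0 :=
    max_eq_left (by nlinarith)
  rw [e1, e2]

/-! ### Plumbing lemmas -/

lemma benefit_eval (α : ℝ) (s : BState 2 2) :
    benefit ![1, α] s = (s.trans 0 : ℝ) + α * s.trans 1 := by
  simp [benefit, Fin.sum_univ_two]

lemma arriveStep_trans {n m : ℕ} (cap : Fin n → ℕ) (qval : Fin n → Fin m)
    (s : BState n m) (q : Fin n) : (arriveStep cap qval s q).trans = s.trans := by
  unfold arriveStep; split_ifs <;> rfl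

lemma benefit_arrive (α : ℝ) (B : ℕ) (s : BState 2 2) (q : Fin 2) :
    benefit ![1, α] (arriveStep (fun _ => B) id s q) = benefit ![1, α] s := by
  rw [benefit_eval, benefit_eval, arriveStep_trans]

lemma arriveStep_queue_self {n m : ℕ} (cap : Fin n → ℕ) (qval : Fin n → Fin m)
    (s : BState n m) (q : Fin n) :
    (arriveStep cap qval s q).queue q
      = if s.queue q < cap q then s.queue q + 1 else s.queue q := by
  unfold arriveStep; split_ifs <;> simp

lemma arriveStep_queue_other {n m : ℕ} (cap : Fin n → ℕ) (qval : Fin n → Fin m)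
    (s : BState n m) (q j : Fin n) (h : j ≠ q) :
    (arriveStep cap qval s q).queue j = s.queue j := by
  unfold arriveStep; split_ifs <;> simp [Function.update_of_ne h]

lemma sendStep_none' {n m : ℕ} (qval : Fin n → Fin m) (s : BState n m) :
    sendStep qval s none = s := rfl

lemma sendStep_queue_self (s : BState 2 2) (q : Fin 2) (h : 0 < s.queue q) :
    (sendStep id s (some q)).queue q = s.queue q - 1 := by
  simp [sendStep, h]

lemma sendStep_queue_other (s : BState 2 2) (q j : Fin 2) (h : j ≠ q) :
    (sendStep id s (some q)).queue j = s.queue j := by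
  show (if 0 < s.queue q then _ else s).queue j = s.queue j
  split_ifs <;> simp [Function.update_of_ne h]

lemma sendStep_benefit (α : ℝ) (s : BState 2 2) (q : Fin 2) (h : 0 < s.queue q) :
    benefit ![1, α] (sendStep id s (some q))
      = benefit ![1, α] s + ![1, α] q := by
  rw [benefit_eval, benefit_eval]
  fin_cases q
  · have h' : 0 < s.queue 0 := h
    simp [sendStep, if_pos h', Function.update_apply]
    ring
  · have h' : 0 < s.queue 1 := h
    simp [sendStep, if_pos h', Function.update_apply]
    ring

/-- One arrive event: invariants are preserved and the potential does not
increase. -/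
lemma arrive_step_all (α : ℝ) (hα : 1 < α) (B : ℕ) (q : Fin 2) (sg sd : BState 2 2)
    (h1 : sg.queue 1 ≤ sd.queue 1) (h2 : sg.queue 0 ≤ B) (h3 : sg.queue 1 ≤ B)
    (h4 : sd.queue 0 ≤ B) (h5 : sd.queue 1 ≤ B) :
    ((arriveStep (fun _ => B) id sg q).queue 1 ≤ (arriveStep (fun _ => B) id sd q).queue 1) ∧
    ((arriveStep (fun _ => B) id sg q).queue 0 ≤ B) ∧
    ((arriveStep (fun _ => B) id sg q).queue 1 ≤ B) ∧
    ((arriveStep (fun _ => B) id sd q).queue 0 ≤ B) ∧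
    ((arriveStep (fun _ => B) id sd q).queue 1 ≤ B) ∧
    abPsi α ((arriveStep (fun _ => B) id sg q).queue 0) ((arriveStep (fun _ => B) id sg q).queue 1)
          ((arriveStep (fun _ => B) id sd q).queue 0) ((arriveStep (fun _ => B) id sd q).queue 1)
      ≤ abPsi α (sg.queue 0) (sg.queue 1) (sd.queue 0) (sd.queue 1) := by
  have hq : q = 0 ∨ q = 1 := by
    rcases q with ⟨v, hv⟩
    interval_cases v
    · exact Or.inl rfl
    · exact Or.inr rfl
  rcases hq with rfl | rfl
  · -- a 1-valued packet arrives at queue 0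
    have eg0 := arriveStep_queue_self (fun _ => B) (id : Fin 2 → Fin 2) sg 0
    have ed0 := arriveStep_queue_self (fun _ => B) (id : Fin 2 → Fin 2) sd 0
    have eg1 := arriveStep_queue_other (fun _ => B) (id : Fin 2 → Fin 2) sg 0 1 (by decide)
    have ed1 := arriveStep_queue_other (fun _ => B) (id : Fin 2 → Fin 2) sd 0 1 (by decide)
    rcases lt_or_ge (sg.queue 0) B with hg | hg <;>
      rcases lt_or_ge (sd.queue 0) B with hd | hd
    · rw [if_pos hg] at eg0; rw [if_pos hd] at ed0
      refine ⟨by omega, by omega, by omega, by omega, by omega, ?_⟩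
      rw [eg0, ed0, eg1, ed1]; push_cast
      exact abArr0_both α hα _ _ _ _
    · rw [if_pos hg] at eg0; rw [if_neg (by omega)] at ed0
      refine ⟨by omega, by omega, by omega, by omega, by omega, ?_⟩
      rw [eg0, ed0, eg1, ed1]; push_cast
      exact abArr0_g α hα _ _ _ _
    · rw [if_neg (by omega)] at eg0; rw [if_pos hd] at ed0
      refine ⟨by omega, by omega, by omega, by omega, by omega, ?_⟩
      rw [eg0, ed0, eg1, ed1]; push_cast
      refine abArr0_d α hα _ _ _ _ ?_ ?_ (Nat.cast_nonneg _)
      · exact_mod_cast (by omega : sd.queue 0 + 1 ≤ sg.queue 0)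
      · exact_mod_cast (by omega : sd.queue 1 ≤ sg.queue 0)
    · rw [if_neg (by omega)] at eg0; rw [if_neg (by omega)] at ed0
      refine ⟨by omega, by omega, by omega, by omega, by omega, ?_⟩
      rw [eg0, ed0, eg1, ed1]
  · -- an α-valued packet arrives at queue 1
    have eg1 := arriveStep_queue_self (fun _ => B) (id : Fin 2 → Fin 2) sg 1
    have ed1 := arriveStep_queue_self (fun _ => B) (id : Fin 2 → Fin 2) sd 1
    have eg0 := arriveStep_queue_other (fun _ => B) (id : Fin 2 → Fin 2) sg 1 0 (by decide)
    have ed0 := arriveStep_queue_other (fun _ => B) (id : Fin 2 → Fin 2) sd 1 0 (by decide)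
    rcases lt_or_ge (sg.queue 1) B with hg | hg <;>
      rcases lt_or_ge (sd.queue 1) B with hd | hd
    · rw [if_pos hg] at eg1; rw [if_pos hd] at ed1
      refine ⟨by omega, by omega, by omega, by omega, by omega, ?_⟩
      rw [eg0, ed0, eg1, ed1]; push_cast
      exact abArr1_both α hα _ _ _ _
    · rw [if_pos hg] at eg1; rw [if_neg (by omega)] at ed1
      refine ⟨by omega, by omega, by omega, by omega, by omega, ?_⟩
      rw [eg0, ed0, eg1, ed1]; push_cast
      exact abArr1_g α hα _ _ _ _
    · exact absurd h1 (by omega)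
    · rw [if_neg (by omega)] at eg1; rw [if_neg (by omega)] at ed1
      refine ⟨by omega, by omega, by omega, by omega, by omega, ?_⟩
      rw [eg0, ed0, eg1, ed1]


/-- One send event: invariants are preserved and the amortized inequality holds. -/
lemma send_step_all (α : ℝ) (hα : 1 < α) (B : ℕ) (gk dk : Option (Fin 2))
    (sg sd : BState 2 2)
    (h1 : sg.queue 1 ≤ sd.queue 1) (h2 : sg.queue 0 ≤ B) (h3 : sg.queue 1 ≤ B)
    (h4 : sd.queue 0 ≤ B) (h5 : sd.queue 1 ≤ B)
    (hghs : ∀ q, gk = some q → 0 < sg.queue q ∧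
               ∀ q', 0 < sg.queue q' → (![1,α] : Fin 2 → ℝ) (id q') ≤ ![1,α] (id q))
    (hghn : gk = none → ∀ q, sg.queue q = 0)
    (hdhs : ∀ q, dk = some q → 0 < sd.queue q)
    (hdhn : dk = none → ∀ q, sd.queue q = 0) :
    ((sendStep id sg gk).queue 1 ≤ (sendStep id sd dk).queue 1) ∧
    ((sendStep id sg gk).queue 0 ≤ B) ∧
    ((sendStep id sg gk).queue 1 ≤ B) ∧
    ((sendStep id sd dk).queue 0 ≤ B) ∧
    ((sendStep id sd dk).queue 1 ≤ B) ∧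
    ((α+1) * benefit ![1,α] (sendStep id sd dk)
       + abPsi α ((sendStep id sg gk).queue 0) ((sendStep id sg gk).queue 1)
                 ((sendStep id sd dk).queue 0) ((sendStep id sd dk).queue 1)
     ≤ (α+1) * benefit ![1,α] sd
       + abPsi α (sg.queue 0) (sg.queue 1) (sd.queue 0) (sd.queue 1)
       + (α+2) * (benefit ![1,α] (sendStep id sg gk) - benefit ![1,α] sg)) := by
  -- normalize the two decisions
  have hgk : gk = none ∨ gk = some 0 ∨ gk = some 1 := by
    rcases gk with _ | ⟨v, hv⟩
    · exact Or.inl rfl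
    · interval_cases v
      · exact Or.inr (Or.inl rfl)
      · exact Or.inr (Or.inr rfl)
  have hdk : dk = none ∨ dk = some 0 ∨ dk = some 1 := by
    rcases dk with _ | ⟨v, hv⟩
    · exact Or.inl rfl
    · interval_cases v
      · exact Or.inr (Or.inl rfl)
      · exact Or.inr (Or.inr rfl)
  rcases hgk with rfl | rfl | rfl
  · -- greedy idles: its queues are empty
    have hg0 : sg.queue 0 = 0 := hghn rfl 0
    have hg1 : sg.queue 1 = 0 := hghn rfl 1
    rw [sendStep_none']
    rcases hdk with rfl | rfl | rfl
    · -- (none, none)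
      have hd0 : sd.queue 0 = 0 := hdhn rfl 0
      have hd1 : sd.queue 1 = 0 := hdhn rfl 1
      rw [sendStep_none']
      exact ⟨h1, h2, h3, h4, h5, by linarith⟩
    · -- (none, send 1-packet)
      have hd0 : 0 < sd.queue 0 := hdhs 0 rfl
      have Ed0 : (sendStep id sd (some 0)).queue 0 = sd.queue 0 - 1 :=
        sendStep_queue_self sd 0 hd0
      have Ed1 : (sendStep id sd (some 0)).queue 1 = sd.queue 1 :=
        sendStep_queue_other sd 0 1 (by decide)
      have Bd : benefit ![1,α] (sendStep id sd (some 0)) = benefit ![1,α] sd + 1 := by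
        simpa using sendStep_benefit α sd 0 hd0
      rw [Ed0, Ed1]
      refine ⟨by omega, by omega, by omega, by omega, by omega, ?_⟩
      rw [Bd, Nat.cast_sub hd0, hg0, hg1]
      push_cast
      have := abStep_01 α hα (sd.queue 0) (sd.queue 1)
        (by exact_mod_cast hd0) (Nat.cast_nonneg _)
      linarith
    · -- (none, send α-packet)
      have hd1 : 0 < sd.queue 1 := hdhs 1 rfl
      have Ed1 : (sendStep id sd (some 1)).queue 1 = sd.queue 1 - 1 :=
        sendStep_queue_self sd 1 hd1
      have Ed0 : (sendStep id sd (some 1)).queue 0 = sd.queue 0 :=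
        sendStep_queue_other sd 1 0 (by decide)
      have Bd : benefit ![1,α] (sendStep id sd (some 1)) = benefit ![1,α] sd + α := by
        simpa using sendStep_benefit α sd 1 hd1
      rw [Ed0, Ed1]
      refine ⟨by omega, by omega, by omega, by omega, by omega, ?_⟩
      rw [Bd, Nat.cast_sub hd1, hg0, hg1]
      push_cast
      have := abStep_0a α hα (sd.queue 0) (sd.queue 1)
        (Nat.cast_nonneg _) (by exact_mod_cast hd1)
      linarith
  · -- greedy sends a 1-packet: the α-queue of greedy is empty
    have hg0 : 0 < sg.queue 0 := (hghs 0 rfl).1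
    have hg1 : sg.queue 1 = 0 := by
      by_contra hne
      have := (hghs 0 rfl).2 1 (Nat.pos_of_ne_zero hne)
      simp at this
      linarith
    have Eg0 : (sendStep id sg (some 0)).queue 0 = sg.queue 0 - 1 :=
      sendStep_queue_self sg 0 hg0
    have Eg1 : (sendStep id sg (some 0)).queue 1 = sg.queue 1 :=
      sendStep_queue_other sg 0 1 (by decide)
    have Bg : benefit ![1,α] (sendStep id sg (some 0)) = benefit ![1,α] sg + 1 := by
      simpa using sendStep_benefit α sg 0 hg0
    rcases hdk with rfl | rfl | rfl
    · -- (send 1, none)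
      have hd0 : sd.queue 0 = 0 := hdhn rfl 0
      have hd1 : sd.queue 1 = 0 := hdhn rfl 1
      rw [sendStep_none', Eg0, Eg1]
      refine ⟨by omega, by omega, by omega, h4, h5, ?_⟩
      rw [Bg, Nat.cast_sub hg0, hg1, hd0, hd1]
      push_cast
      have := abStep_10 α hα (sg.queue 0) (by exact_mod_cast hg0)
      linarith
    · -- (send 1, send 1)
      have hd0 : 0 < sd.queue 0 := hdhs 0 rfl
      have Ed0 : (sendStep id sd (some 0)).queue 0 = sd.queue 0 - 1 :=
        sendStep_queue_self sd 0 hd0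
      have Ed1 : (sendStep id sd (some 0)).queue 1 = sd.queue 1 :=
        sendStep_queue_other sd 0 1 (by decide)
      have Bd : benefit ![1,α] (sendStep id sd (some 0)) = benefit ![1,α] sd + 1 := by
        simpa using sendStep_benefit α sd 0 hd0
      rw [Eg0, Eg1, Ed0, Ed1]
      refine ⟨by omega, by omega, by omega, by omega, by omega, ?_⟩
      rw [Bg, Bd, Nat.cast_sub hg0, Nat.cast_sub hd0, hg1]
      push_cast
      have := abStep_11 α hα (sg.queue 0) (sd.queue 0) (sd.queue 1)
      linarith
    · -- (send 1, send α)
      have hd1 : 0 < sd.queue 1 := hdhs 1 rfl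
      have Ed1 : (sendStep id sd (some 1)).queue 1 = sd.queue 1 - 1 :=
        sendStep_queue_self sd 1 hd1
      have Ed0 : (sendStep id sd (some 1)).queue 0 = sd.queue 0 :=
        sendStep_queue_other sd 1 0 (by decide)
      have Bd : benefit ![1,α] (sendStep id sd (some 1)) = benefit ![1,α] sd + α := by
        simpa using sendStep_benefit α sd 1 hd1
      rw [Eg0, Eg1, Ed0, Ed1]
      refine ⟨by omega, by omega, by omega, by omega, by omega, ?_⟩
      rw [Bg, Bd, Nat.cast_sub hg0, Nat.cast_sub hd1, hg1]
      push_cast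
      have := abStep_1a α hα (sg.queue 0) (sd.queue 0) (sd.queue 1)
      linarith
  · -- greedy sends an α-packet
    have hg1 : 0 < sg.queue 1 := (hghs 1 rfl).1
    have Eg1 : (sendStep id sg (some 1)).queue 1 = sg.queue 1 - 1 :=
      sendStep_queue_self sg 1 hg1
    have Eg0 : (sendStep id sg (some 1)).queue 0 = sg.queue 0 :=
      sendStep_queue_other sg 1 0 (by decide)
    have Bg : benefit ![1,α] (sendStep id sg (some 1)) = benefit ![1,α] sg + α := by
      simpa using sendStep_benefit α sg 1 hg1
    rcases hdk with rfl | rfl | rfl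
    · -- (send α, none)
      have hd0 : sd.queue 0 = 0 := hdhn rfl 0
      have hd1 : sd.queue 1 = 0 := hdhn rfl 1
      rw [sendStep_none', Eg0, Eg1]
      refine ⟨by omega, by omega, by omega, h4, h5, ?_⟩
      rw [Bg, Nat.cast_sub hg1, hd0, hd1]
      push_cast
      have := abStep_a0 α hα (sg.queue 0) (sg.queue 1)
        (Nat.cast_nonneg _) (by exact_mod_cast hg1)
      linarith
    · -- (send α, send 1)
      have hd0 : 0 < sd.queue 0 := hdhs 0 rfl
      have Ed0 : (sendStep id sd (some 0)).queue 0 = sd.queue 0 - 1 :=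
        sendStep_queue_self sd 0 hd0
      have Ed1 : (sendStep id sd (some 0)).queue 1 = sd.queue 1 :=
        sendStep_queue_other sd 0 1 (by decide)
      have Bd : benefit ![1,α] (sendStep id sd (some 0)) = benefit ![1,α] sd + 1 := by
        simpa using sendStep_benefit α sd 0 hd0
      rw [Eg0, Eg1, Ed0, Ed1]
      refine ⟨by omega, by omega, by omega, by omega, by omega, ?_⟩
      rw [Bg, Bd, Nat.cast_sub hg1, Nat.cast_sub hd0]
      push_cast
      have := abStep_a1 α hα (sg.queue 0) (sg.queue 1) (sd.queue 0) (sd.queue 1)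
      linarith
    · -- (send α, send α)
      have hd1 : 0 < sd.queue 1 := hdhs 1 rfl
      have Ed1 : (sendStep id sd (some 1)).queue 1 = sd.queue 1 - 1 :=
        sendStep_queue_self sd 1 hd1
      have Ed0 : (sendStep id sd (some 1)).queue 0 = sd.queue 0 :=
        sendStep_queue_other sd 1 0 (by decide)
      have Bd : benefit ![1,α] (sendStep id sd (some 1)) = benefit ![1,α] sd + α := by
        simpa using sendStep_benefit α sd 1 hd1
      rw [Eg0, Eg1, Ed0, Ed1]
      refine ⟨by omega, by omega, by omega, by omega, by omega, ?_⟩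
      rw [Bg, Bd, Nat.cast_sub hg1, Nat.cast_sub hd1]
      push_cast
      have := abStep_aa α hα (sg.queue 0) (sg.queue 1) (sd.queue 0) (sd.queue 1)
      linarith

/-- The main amortized induction. -/
lemma key_induction (α : ℝ) (hα : 1 < α) (B : ℕ) (g d : ℕ → Option (Fin 2))
    (es : List (BEvent 2)) :
    ∀ (k : ℕ) (sg sd : BState 2 2),
      sg.queue 1 ≤ sd.queue 1 → sg.queue 0 ≤ B → sg.queue 1 ≤ B →
      sd.queue 0 ≤ B → sd.queue 1 ≤ B →
      GreedyFeasible ![1, α] (fun _ => B) id g es k sg →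
      Feasible (fun _ => B) id d es k sd →
      ((run (fun _ => B) id g es k sg).queue 1
          ≤ (run (fun _ => B) id d es k sd).queue 1) ∧
      ((α+1) * benefit ![1,α] (run (fun _ => B) id d es k sd)
         + abPsi α ((run (fun _ => B) id g es k sg).queue 0)
                   ((run (fun _ => B) id g es k sg).queue 1)
                   ((run (fun _ => B) id d es k sd).queue 0)
                   ((run (fun _ => B) id d es k sd).queue 1)
       ≤ (α+1) * benefit ![1,α] sd
         + abPsi α (sg.queue 0) (sg.queue 1) (sd.queue 0) (sd.queue 1)
         + (α+2) * (benefit ![1,α] (run (fun _ => B) id g es k sg)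
                      - benefit ![1,α] sg)) := by
  induction es with
  | nil =>
    intro k sg sd h1 h2 h3 h4 h5 hg hd
    simp only [run]
    exact ⟨h1, by linarith⟩
  | cons e es ih =>
    intro k sg sd h1 h2 h3 h4 h5 hg hd
    cases e with
    | arrive q =>
      simp only [run]
      simp only [GreedyFeasible] at hg
      simp only [Feasible] at hd
      obtain ⟨i1, i2, i3, i4, i5, hpsi⟩ :=
        arrive_step_all α hα B q sg sd h1 h2 h3 h4 h5
      obtain ⟨P1, P2⟩ := ih k _ _ i1 i2 i3 i4 i5 hg hd
      refine ⟨P1, ?_⟩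
      have e1 := benefit_arrive α B sg q
      have e2 := benefit_arrive α B sd q
      rw [e1, e2] at P2
      linarith
    | send =>
      simp only [run]
      simp only [GreedyFeasible] at hg
      simp only [Feasible] at hd
      obtain ⟨hgh, hg2⟩ := hg
      obtain ⟨hdh, hd2⟩ := hd
      obtain ⟨i1, i2, i3, i4, i5, hstep⟩ :=
        send_step_all α hα B (g k) (d k) sg sd h1 h2 h3 h4 h5
          (fun q hq => by simp only [hq] at hgh; exact hgh)
          (fun hq => by simp only [hq] at hgh; exact hgh)
          (fun q hq => by simp only [hq] at hdh; exact hdh)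
          (fun hq => by simp only [hq] at hdh; exact hdh)
      obtain ⟨P1, P2⟩ := ih (k+1) _ _ i1 i2 i3 i4 i5 hg2 hd2
      refine ⟨P1, ?_⟩
      ring_nf at P2 hstep ⊢
      linarith


/-- In the restricted two-valued class-segregated buffer
model (one queue for value `1`, one queue for value `α > 1`, both of capacity
`B`), GREEDY is `(α+2)/(α+1)`-competitive: the benefit of any feasible
diligent schedule `d` is at most `(α+2)/(α+1)` times the benefit of any
GREEDY schedule `g`. -/
theorem greedy_two_values_restricted_competitive
    (α : ℝ) (hα : 1 < α) (B : ℕ)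
    (σ : List (BEvent 2)) (g d : ℕ → Option (Fin 2))
    (hg : GreedyFeasible ![1, α] (fun _ => B) id g σ 0 (initState 2 2))
    (hd : Feasible (fun _ => B) id d σ 0 (initState 2 2)) :
    benefit ![1, α] (run (fun _ => B) id d σ 0 (initState 2 2)) ≤
      ((α + 2) / (α + 1)) *
        benefit ![1, α] (run (fun _ => B) id g σ 0 (initState 2 2)) := by
  obtain ⟨P1, P2⟩ := key_induction α hα B g d σ 0 (initState 2 2) (initState 2 2)
    le_rfl (Nat.zero_le _) (Nat.zero_le _) (Nat.zero_le _) (Nat.zero_le _) hg hd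
  have hb0 : benefit ![1,α] (initState 2 2) = 0 := by
    simp [benefit_eval, initState]
  have hq : ((initState 2 2).queue 0 : ℝ) = 0 := by simp [initState]
  have hpsi0 : abPsi α ((initState 2 2).queue 0) ((initState 2 2).queue 1)
      ((initState 2 2).queue 0) ((initState 2 2).queue 1) = 0 := by
    simp [abPsi, initState]
  have hpsif : 0 ≤ abPsi α ((run (fun _ => B) id g σ 0 (initState 2 2)).queue 0)
      ((run (fun _ => B) id g σ 0 (initState 2 2)).queue 1)
      ((run (fun _ => B) id d σ 0 (initState 2 2)).queue 0)
      ((run (fun _ => B) id d σ 0 (initState 2 2)).queue 1) :=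
    abPsi_nonneg α hα (by exact_mod_cast P1)
  rw [hb0, hpsi0] at P2
  rw [div_mul_eq_mul_div, le_div_iff₀ (by linarith : (0:ℝ) < α + 1)]
  nlinarith [P2, hpsif]


end BufferModel
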